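/- Bound on the analysis mean: if R > 0 and Q ≥ 0, then |B(X,Q)| ≤ |X| + |Q| |H| |R^{-1}| |d − H X|, where B(X,Q) = X + K(Q)(d − HX) with K(Q) = Q H*(H Q H* + R)^{-1}. -/

import Mathlib

/-! The gain is `K(Q) = Q H* S⁻¹` with `S = H Q H* + R ≥ R`, so it suffices that `‖S⁻¹‖ ≤ ‖R⁻¹‖`.
For a positive invertible `R`, Cauchy–Schwarz for the form `⟪R ·, ·⟫` applied to `u` and `R⁻¹ u`
gives `‖u‖² ≤ ‖R⁻¹‖ ⟪R u, u⟫`; this lower bound passes from `R` to the larger operator `S`, and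
a lower bound `‖u‖² ≤ c ⟪S u, u⟫` forces `‖S⁻¹‖ ≤ c`. -/

open ContinuousLinearMap RealInnerProductSpace

variable {V W : Type*} [NormedAddCommGroup V] [InnerProductSpace ℝ V] [CompleteSpace V]
  [NormedAddCommGroup W] [InnerProductSpace ℝ W] [CompleteSpace W]

/-- The Kalman gain operator `K(Q) = Q H* (H Q H* + R)⁻¹`. -/
noncomputable def kalmanGain (H : V →L[ℝ] W) (R : W →L[ℝ] W) (Q : V →L[ℝ] V) : W →L[ℝ] V :=
  (Q ∘L ContinuousLinearMap.adjoint H) ∘L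
    Ring.inverse (H ∘L Q ∘L ContinuousLinearMap.adjoint H + R)

/-- The analysis mean map `B(X,Q) = X + K(Q)(d − H X)`. -/
noncomputable def analysisMean (H : V →L[ℝ] W) (R : W →L[ℝ] W) (d : W)
    (X : V) (Q : V →L[ℝ] V) : V :=
  X + kalmanGain H R Q (d - H X)

namespace ContinuousLinearMap

variable {E : Type*} [NormedAddCommGroup E] [InnerProductSpace ℝ E]

theorem apply_ringInverse_apply {T : E →L[ℝ] E} (hT : IsUnit T) (u : E) :
    T (Ring.inverse T u) = u := by
  change (T * Ring.inverse T) u = u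
  rw [Ring.mul_inverse_cancel T hT]; rfl

theorem IsPositive.inner_apply_sq_le {T : E →L[ℝ] E} (hT : T.IsPositive) (x y : E) :
    ⟪T x, y⟫ ^ 2 ≤ ⟪T x, x⟫ * ⟪T y, y⟫ :=
  LinearMap.BilinForm.apply_sq_le_of_symm ((innerₗ E).comp (T : E →ₗ[ℝ] E)) hT.inner_nonneg_left
    ⟨fun a b => by simp [hT.inner_left_eq_inner_right a, real_inner_comm]⟩ x y

theorem IsPositive.norm_sq_le_norm_inverse_mul_inner {T : E →L[ℝ] E} (hT : T.IsPositive)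
    (hT_unit : IsUnit T) (u : E) : ‖u‖ ^ 2 ≤ ‖Ring.inverse T‖ * ⟪T u, u⟫ := by
  set v := Ring.inverse T u
  have hTv : T v = u := apply_ringInverse_apply hT_unit u
  have hv : ‖v‖ ≤ ‖Ring.inverse T‖ * ‖u‖ := (Ring.inverse T).le_opNorm u
  have key : (‖u‖ ^ 2) ^ 2 ≤ ‖u‖ ^ 2 * (‖Ring.inverse T‖ * ⟪T u, u⟫) :=
    calc (‖u‖ ^ 2) ^ 2 = ⟪T v, u⟫ ^ 2 := by rw [hTv, real_inner_self_eq_norm_sq]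
      _ ≤ ⟪T v, v⟫ * ⟪T u, u⟫ := hT.inner_apply_sq_le v u
      _ ≤ (‖u‖ * (‖Ring.inverse T‖ * ‖u‖)) * ⟪T u, u⟫ := by
        gcongr
        · exact hT.inner_nonneg_left u
        · rw [hTv]
          exact (real_inner_le_norm u v).trans (by gcongr)
      _ = ‖u‖ ^ 2 * (‖Ring.inverse T‖ * ⟪T u, u⟫) := by ring
  rcases eq_or_ne u 0 with rfl | hu
  · simp
  · exact le_of_mul_le_mul_left (by nlinarith) (by positivity : 0 < ‖u‖ ^ 2)

theorem norm_inverse_le_of_norm_sq_le_mul_inner {S : E →L[ℝ] E} (hS : IsUnit S) {c : ℝ}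
    (hc : 0 ≤ c) (h : ∀ u, ‖u‖ ^ 2 ≤ c * ⟪S u, u⟫) : ‖Ring.inverse S‖ ≤ c := by
  refine opNorm_le_bound _ hc fun y => ?_
  set u := Ring.inverse S y
  have hSu : S u = y := apply_ringInverse_apply hS y
  have key : ‖u‖ ^ 2 ≤ c * ‖y‖ * ‖u‖ :=
    calc ‖u‖ ^ 2 ≤ c * ⟪S u, u⟫ := h u
      _ ≤ c * (‖y‖ * ‖u‖) := by
        rw [hSu]
        gcongr
        exact real_inner_le_norm y u
      _ = c * ‖y‖ * ‖u‖ := by ring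
  rcases eq_or_lt_of_le (norm_nonneg u) with hu | hu
  · rw [← hu]
    positivity
  · nlinarith

theorem isUnit_of_coercive {S : E →L[ℝ] E} [CompleteSpace E] {α : ℝ} (hα : 0 < α)
    (h : ∀ u, α * ‖u‖ ^ 2 ≤ ⟪S u, u⟫) : IsUnit S :=
  isUnit_of_forall_le_norm_inner_map S (c := ⟨α, hα.le⟩) hα fun u =>
    (mul_comm _ _).le.trans ((h u).trans (le_abs_self _))

theorem IsPositive.norm_inverse_add_le {P R : E →L[ℝ] E} (hP : P.IsPositive)
    (hR : R.IsPositive) (hR_unit : IsUnit R) (hPR_unit : IsUnit (P + R)) :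
    ‖Ring.inverse (P + R)‖ ≤ ‖Ring.inverse R‖ :=
  norm_inverse_le_of_norm_sq_le_mul_inner hPR_unit (norm_nonneg _) fun u =>
    calc ‖u‖ ^ 2 ≤ ‖Ring.inverse R‖ * ⟪R u, u⟫ := hR.norm_sq_le_norm_inverse_mul_inner hR_unit u
      _ ≤ ‖Ring.inverse R‖ * ⟪(P + R) u, u⟫ := by
        gcongr
        simpa [inner_add_left] using hP.inner_nonneg_left u

end ContinuousLinearMap

theorem norm_kalmanGain_le (H : V →L[ℝ] W) {R : W →L[ℝ] W} {Q : V →L[ℝ] V}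
    (hQ : Q.IsPositive) (hR : R.IsPositive) {α : ℝ} (hα : 0 < α)
    (hRα : ∀ u, α * ‖u‖ ^ 2 ≤ ⟪R u, u⟫) :
    ‖kalmanGain H R Q‖ ≤ ‖Q‖ * ‖H‖ * ‖Ring.inverse R‖ := by
  have hP : (H ∘L Q ∘L adjoint H).IsPositive := hQ.conj_adjoint H
  have hS_unit : IsUnit (H ∘L Q ∘L adjoint H + R) :=
    isUnit_of_coercive hα fun u => by
      simpa [inner_add_left] using add_le_add (hP.inner_nonneg_left u) (hRα u)
  calc ‖kalmanGain H R Q‖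
      ≤ ‖Q‖ * ‖adjoint H‖ * ‖Ring.inverse (H ∘L Q ∘L adjoint H + R)‖ :=
        (opNorm_comp_le _ _).trans (by gcongr; exact opNorm_comp_le _ _)
    _ ≤ ‖Q‖ * ‖H‖ * ‖Ring.inverse R‖ := by
        rw [LinearIsometryEquiv.norm_map]
        gcongr
        exact hP.norm_inverse_add_le hR (isUnit_of_coercive hα hRα) hS_unit

/-- Bound on the analysis mean: if `R > 0` and `Q ≥ 0`, then
`|B(X,Q)| ≤ |X| + |Q| |H| |R⁻¹| |d − H X|`. -/
theorem analysisMean_bound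
    (H : V →L[ℝ] W) (R : W →L[ℝ] W) (d : W) (X : V) (Q : V →L[ℝ] V)
    (hQ : Q.IsPositive) (hRsym : IsSelfAdjoint R)
    (hRpos : ∃ α : ℝ, 0 < α ∧ ∀ u : W, α * ‖u‖ ^ 2 ≤ ⟪R u, u⟫) :
    ‖analysisMean H R d X Q‖
      ≤ ‖X‖ + ‖Q‖ * ‖H‖ * ‖(Ring.inverse R : W →L[ℝ] W)‖ * ‖d - H X‖ := by
  obtain ⟨α, hα, hRα⟩ := hRpos
  have hR : R.IsPositive :=
    (isPositive_iff' R).2 ⟨hRsym, fun u => (by positivity : 0 ≤ α * ‖u‖ ^ 2).trans (hRα u)⟩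
  calc ‖analysisMean H R d X Q‖ ≤ ‖X‖ + ‖kalmanGain H R Q‖ * ‖d - H X‖ :=
        (norm_add_le _ _).trans (by gcongr; exact le_opNorm _ _)
    _ ≤ ‖X‖ + ‖Q‖ * ‖H‖ * ‖(Ring.inverse R : W →L[ℝ] W)‖ * ‖d - H X‖ := by
        gcongr
        exact norm_kalmanGain_le H hQ hR hα hRα
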